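/- arXiv:1610.07576 — 2 statements merged into one kernel-verified Lean document; each statement's English description precedes it below -/
import Mathlib

section
/- Under any scaling satisfying the scaling condition Λ_m(n) = c_n (log n)/n with lim_{n→∞} c_n = c > 1, the probability that the random graph H(n; μ, Θ_n) has no isolated nodes tends to 1 as n → ∞. -/
/-!
First-moment argument. Vertex `x` is isolated exactly when the channel from `x` to every vertex
sharing a key with `x` is off. Summing the joint law over the atoms on which this happens, the
channels not incident to `x` sum to one, the key ring of each other vertex `y`, given `x`'s ring,
contributes `1 - α p` independently of the rest, and averaging over the types gives
`P[x isolated] ≤ ∑ᵢ μᵢ (1 - Λᵢ)^(n-1) ≤ exp (-(n-1) Λ_m)`. By the union bound,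
`P[some vertex is isolated] ≤ n exp (-(n-1) c_n log n / n) = exp ((1 - c_n (n-1)/n) log n)`,
which tends to `0` because `c > 1`.
-/

open MeasureTheory Finset Filter

/-- Edge probability between a class-`i` node and a class-`j` node in the
inhomogeneous random key graph. -/
noncomputable def pEdge (P : ℕ) {r : ℕ} (K : Fin r → ℕ) (i j : Fin r) : ℝ :=
  if K i + K j ≤ P then
    1 - ((P - K i).choose (K j) : ℝ) / (P.choose (K j) : ℝ)
  else 1

/-- Mean edge probability `Λ_i` of a class-`i` node in the intersection model. -/
noncomputable def LamE {r : ℕ} (μ : Fin r → ℝ) (α : Fin r → Fin r → ℝ)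
    (P : ℕ) (K : Fin r → ℕ) (i : Fin r) : ℝ :=
  ∑ j, μ j * (α i j * pEdge P K i j)

/-- Minimum mean edge probability `Λ_m`. -/
noncomputable def LamMin {r : ℕ} (μ : Fin r → ℝ) (α : Fin r → Fin r → ℝ)
    (P : ℕ) (K : Fin r → ℕ) : ℝ :=
  ⨅ i, LamE μ α P K i

/-- The random graph `H(n; μ, Θ)`: random types (distribution `μ`), random key
rings (uniform `K`-subsets of a `P`-pool, given types), and random channel
indicators (Bernoulli `α_{ij}`, given types), all with the joint distribution
described by the field `joint`. -/
structure HetModel (r n P : ℕ) (K : Fin r → ℕ) (μ : Fin r → ℝ)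
    (α : Fin r → Fin r → ℝ) (Ω : Type) [MeasurableSpace Ω]
    (Pr : Measure Ω) : Type where
  typ : Ω → Fin n → Fin r
  keyring : Ω → Fin n → Finset (Fin P)
  chan : Ω → Fin n → Fin n → Bool
  joint : ∀ (t₀ : Fin n → Fin r) (σ₀ : Fin n → Finset (Fin P))
      (b₀ : Fin n → Fin n → Bool),
      Pr {ω | typ ω = t₀ ∧ keyring ω = σ₀ ∧
              ∀ x y : Fin n, x < y → chan ω x y = b₀ x y}
        = ENNReal.ofReal
            ((∏ x, μ (t₀ x)) *
             (∏ x, if (σ₀ x).card = K (t₀ x)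
                   then ((P.choose (K (t₀ x)) : ℝ))⁻¹ else 0) *
             (∏ x : Fin n, ∏ y ∈ univ.filter (fun y => x < y),
                (if b₀ x y then α (t₀ x) (t₀ y) else 1 - α (t₀ x) (t₀ y))))

variable {r n P : ℕ} {K : Fin r → ℕ} {μ : Fin r → ℝ} {α : Fin r → Fin r → ℝ}
  {Ω : Type} [MeasurableSpace Ω] {Pr : Measure Ω}

/-- Adjacency in `H(n; μ, Θ)`: distinct vertices sharing a key whose channel is on. -/
def HetModel.Adj (M : HetModel r n P K μ α Ω Pr) (ω : Ω) (x y : Fin n) : Prop :=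
  x ≠ y ∧ ((M.keyring ω x) ∩ (M.keyring ω y)).Nonempty ∧
    (if x < y then M.chan ω x y else M.chan ω y x) = true

/-- A vertex is isolated if it is adjacent to no other vertex. -/
def HetModel.Isolated (M : HetModel r n P K μ α Ω Pr) (ω : Ω) (x : Fin n) : Prop :=
  ∀ y : Fin n, ¬ M.Adj ω x y

theorem Fintype.sum_pi_prod_mul_prod_erase {ι A R : Type*} [Fintype ι] [DecidableEq ι]
    [Fintype A] [DecidableEq A] [CommSemiring R] (x : ι) (g : ι → A → R) (s : ι → A → A → R) :
    ∑ σ : ι → A, (∏ y, g y (σ y)) * ∏ y ∈ univ.erase x, s y (σ x) (σ y) =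
      ∑ v, g x v * ∏ y ∈ univ.erase x, ∑ u, g y u * s y v u := by
  -- `∏ y, H v y (σ y)` is the integrand restricted to `σ x = v`, and it factors over `y`.
  set H : A → ι → A → R := fun v y u =>
    if y = x then (if u = v then g y u else 0) else g y u * s y v u
  have hH : ∀ v, ∀ y ∈ univ.erase x, H v y = fun u => g y u * s y v u := fun v y hy => by
    simp [H, ne_of_mem_erase hy]
  have hσ : ∀ σ : ι → A, (∏ y, g y (σ y)) * ∏ y ∈ univ.erase x, s y (σ x) (σ y) =
      ∑ v, ∏ y, H v y (σ y) := fun σ => by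
    simp_rw [← Finset.mul_prod_erase univ _ (mem_univ x),
      Finset.prod_congr rfl fun y hy => congrFun (hH _ y hy) _]
    simp [H, Finset.prod_mul_distrib, mul_assoc]
  have hv : ∀ v, ∏ y, ∑ u, H v y u = g x v * ∏ y ∈ univ.erase x, ∑ u, g y u * s y v u :=
    fun v => by
      rw [← Finset.mul_prod_erase univ _ (mem_univ x),
        Finset.prod_congr rfl fun y hy => by rw [hH v y hy]]
      simp [H]
  simp_rw [hσ]
  rw [Finset.sum_comm]
  simp_rw [← Fintype.prod_sum, hv]

lemma prod_prod_ite_lt_eq_prod_erase {ι M : Type*} [Fintype ι] [LinearOrder ι] [CommMonoid M]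
    (x : ι) (S : Finset ι) (f : ι → ι → M) (hf : ∀ y z, f y z = f z y) :
    ∏ y, ∏ z, (if y < z ∧ (y = x ∧ z ∈ S ∨ z = x ∧ y ∈ S) then f y z else 1) =
      ∏ y ∈ univ.erase x, if y ∈ S then f x y else 1 := by
  have hsplit : ∀ y z, (if y < z ∧ (y = x ∧ z ∈ S ∨ z = x ∧ y ∈ S) then f y z else 1) =
      (if y = x then (if x < z ∧ z ∈ S then f x z else 1) else 1) *
      (if z = x then (if y < x ∧ y ∈ S then f x y else 1) else 1) := by
    intro y z
    by_cases hy : y = x <;> by_cases hz : z = x <;> simp [hy, hz, hf y x]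
  have hrow : ∀ y ∈ univ.erase x, (if y ∈ S then f x y else 1) =
      (if x < y ∧ y ∈ S then f x y else 1) * (if y < x ∧ y ∈ S then f x y else 1) := by
    intro y hy
    rcases lt_or_gt_of_ne (ne_of_mem_erase hy) with h | h <;> simp [h, h.not_gt]
  simp only [hsplit, prod_mul_distrib, prod_ite_irrel, prod_const_one, prod_ite_eq', mem_univ,
    if_true]
  rw [prod_congr rfl hrow, prod_mul_distrib, prod_erase _ (by simp), prod_erase _ (by simp)]

lemma sum_mul_one_sub_pow_le_exp {ι : Type*} [Fintype ι] {w Λ : ι → ℝ} {m : ℝ}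
    (hw0 : ∀ i, 0 ≤ w i) (hw : ∑ i, w i = 1) (hΛ : ∀ i, Λ i ≤ 1) (hm : ∀ i, m ≤ Λ i) (k : ℕ) :
    ∑ i, w i * (1 - Λ i) ^ k ≤ Real.exp (-(k * m)) := by
  have hterm : ∀ i, (1 - Λ i) ^ k ≤ Real.exp (-(k * m)) := fun i =>
    calc (1 - Λ i) ^ k ≤ Real.exp (-Λ i) ^ k :=
          pow_le_pow_left₀ (by linarith [hΛ i]) (by linarith [Real.add_one_le_exp (-Λ i)]) k
      _ = Real.exp (-(k * Λ i)) := by rw [← Real.exp_nat_mul]; ring_nf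
      _ ≤ Real.exp (-(k * m)) := by gcongr; exact hm i
  calc ∑ i, w i * (1 - Λ i) ^ k ≤ ∑ i, w i * Real.exp (-(k * m)) :=
        sum_le_sum fun i _ => mul_le_mul_of_nonneg_left (hterm i) (hw0 i)
    _ = Real.exp (-(k * m)) := by rw [← sum_mul, hw, one_mul]

noncomputable def keyWeight (P k : ℕ) (s : Finset (Fin P)) : ℝ :=
  if s.card = k then ((P.choose k : ℝ))⁻¹ else 0

lemma keyWeight_nonneg (P k : ℕ) (s : Finset (Fin P)) : 0 ≤ keyWeight P k s := by
  unfold keyWeight; split_ifs <;> positivity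

lemma sum_keyWeight_mul (P k : ℕ) (f : Finset (Fin P) → ℝ) :
    ∑ s, keyWeight P k s * f s = (∑ s ∈ univ.powersetCard k, f s) / P.choose k := by
  simp [keyWeight, ← sum_filter, div_eq_inv_mul, mul_sum]

lemma sum_keyWeight {P k : ℕ} (hk : k ≤ P) : ∑ s, keyWeight P k s = 1 := by
  simpa [(Nat.choose_pos hk).ne'] using sum_keyWeight_mul P k 1

lemma card_powersetCard_filter_disjoint (P k : ℕ) (v : Finset (Fin P)) :
    #{s ∈ (univ : Finset (Fin P)).powersetCard k | Disjoint v s} = (P - #v).choose k := by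
  have : {s ∈ (univ : Finset (Fin P)).powersetCard k | Disjoint v s} = vᶜ.powersetCard k := by
    ext s
    simp [mem_powersetCard, ← le_compl_iff_disjoint_left, and_comm]
  rw [this, card_powersetCard, card_compl, Fintype.card_fin]

lemma sum_keyWeight_mul_ite_nonempty_inter {P k : ℕ} (a : ℝ) (v : Finset (Fin P))
    (hk : #v + k ≤ P) :
    ∑ s, keyWeight P k s * (if (v ∩ s).Nonempty then 1 - a else 1) =
      1 - a * (1 - ((P - #v).choose k : ℝ) / P.choose k) := by
  have hC : (P.choose k : ℝ) ≠ 0 := by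
    have := Nat.choose_pos (k := k) (n := P) (by omega); positivity
  have hite : ∀ s : Finset (Fin P), (if (v ∩ s).Nonempty then 1 - a else 1) =
      (1 - a) + a * (if Disjoint v s then 1 else 0) := fun s => by
    by_cases h : Disjoint v s <;> simp [h, ← not_disjoint_iff_nonempty_inter]
  simp_rw [sum_keyWeight_mul, hite, sum_add_distrib, ← mul_sum, sum_boole,
    card_powersetCard_filter_disjoint, sum_const, card_powersetCard, card_univ, Fintype.card_fin]
  field_simp
  ring

noncomputable def channelWeight (q : Fin n → Fin n → ℝ) (b : Fin n → Fin n → Bool) : ℝ :=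
  ∏ y, ∏ z ∈ univ.filter (fun z => y < z), if b y z then q y z else 1 - q y z

lemma channelWeight_nonneg {q : Fin n → Fin n → ℝ} (hq0 : ∀ y z, 0 ≤ q y z)
    (hq1 : ∀ y z, q y z ≤ 1) (b : Fin n → Fin n → Bool) : 0 ≤ channelWeight q b :=
  prod_nonneg fun y _ => prod_nonneg fun z _ => by
    split_ifs
    · exact hq0 y z
    · linarith [hq1 y z]

/-- The channel configurations under which `x` is adjacent to no vertex of `S`. Only the entries
`b y z` with `y < z` are random; the others are pinned to `false`, so that every configuration is
counted once. -/
def isolatingChannels (x : Fin n) (S : Finset (Fin n)) : Finset (Fin n → Fin n → Bool) :=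
  Fintype.piFinset fun y => Fintype.piFinset fun z =>
    if y < z ∧ ¬(y = x ∧ z ∈ S ∨ z = x ∧ y ∈ S) then univ else {false}

lemma sum_channelWeight_isolatingChannels (x : Fin n) (S : Finset (Fin n))
    (q : Fin n → Fin n → ℝ) (hq : ∀ y z, q y z = q z y) :
    ∑ b ∈ isolatingChannels x S, channelWeight q b =
      ∏ y ∈ univ.erase x, if y ∈ S then 1 - q x y else 1 := by
  have hentry : ∀ y z,
      ∑ v ∈ (if y < z ∧ ¬(y = x ∧ z ∈ S ∨ z = x ∧ y ∈ S) then univ else {false}),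
        (if y < z then (if v then q y z else 1 - q y z) else 1) =
      if y < z ∧ (y = x ∧ z ∈ S ∨ z = x ∧ y ∈ S) then 1 - q y z else 1 := by
    intro y z
    by_cases hyz : y < z <;> by_cases hcut : y = x ∧ z ∈ S ∨ z = x ∧ y ∈ S <;> simp [hyz, hcut]
  rw [← prod_prod_ite_lt_eq_prod_erase x S (fun y z => 1 - q y z) fun y z => by rw [hq]]
  simp only [← hentry, prod_univ_sum, channelWeight, prod_filter, isolatingChannels]

lemma pEdge_nonneg (P : ℕ) (K : Fin r → ℕ) (i j : Fin r) : 0 ≤ pEdge P K i j := by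
  unfold pEdge
  split_ifs
  · have : ((P - K i).choose (K j) : ℝ) ≤ P.choose (K j) :=
      Nat.cast_le.2 (Nat.choose_le_choose _ (Nat.sub_le _ _))
    linarith [div_le_one_of_le₀ this (Nat.cast_nonneg _)]
  · exact zero_le_one

lemma pEdge_le_one (P : ℕ) (K : Fin r → ℕ) (i j : Fin r) : pEdge P K i j ≤ 1 := by
  unfold pEdge
  split_ifs
  · linarith [show (0 : ℝ) ≤ ((P - K i).choose (K j) : ℝ) / P.choose (K j) by positivity]
  · exact le_rfl

lemma LamE_le_one (hμ0 : ∀ i, 0 ≤ μ i) (hμ : ∑ i, μ i = 1) (hα1 : ∀ i j, α i j ≤ 1)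
    (i : Fin r) : LamE μ α P K i ≤ 1 :=
  calc LamE μ α P K i ≤ ∑ j, μ j * 1 := sum_le_sum fun j _ => mul_le_mul_of_nonneg_left
        (mul_le_one₀ (hα1 i j) (pEdge_nonneg P K i j) (pEdge_le_one P K i j)) (hμ0 j)
    _ = 1 := by simp [hμ]

lemma LamMin_le_LamE (i : Fin r) : LamMin μ α P K ≤ LamE μ α P K i :=
  ciInf_le (Set.finite_range _).bddBelow i

lemma sum_mul_one_sub_mul_pEdge (hμ : ∑ i, μ i = 1) (i : Fin r) :
    ∑ j, μ j * (1 - α i j * pEdge P K i j) = 1 - LamE μ α P K i := by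
  simp only [LamE, mul_one_sub, sum_sub_distrib, hμ]

lemma sum_keyWeight_mul_prod_erase_ite (hK : ∀ i j, K i + K j ≤ P) (t : Fin n → Fin r)
    (x : Fin n) :
    ∑ σ : Fin n → Finset (Fin P), (∏ y, keyWeight P (K (t y)) (σ y)) *
        ∏ y ∈ univ.erase x, (if (σ x ∩ σ y).Nonempty then 1 - α (t x) (t y) else 1) =
      ∏ y ∈ univ.erase x, (1 - α (t x) (t y) * pEdge P K (t x) (t y)) := by
  rw [Fintype.sum_pi_prod_mul_prod_erase x (fun y => keyWeight P (K (t y)))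
    (fun y v u => if (v ∩ u).Nonempty then 1 - α (t x) (t y) else 1)]
  have hv : ∀ v : Finset (Fin P), keyWeight P (K (t x)) v *
      ∏ y ∈ univ.erase x, ∑ u, keyWeight P (K (t y)) u *
        (if (v ∩ u).Nonempty then 1 - α (t x) (t y) else 1) =
      keyWeight P (K (t x)) v *
        ∏ y ∈ univ.erase x, (1 - α (t x) (t y) * pEdge P K (t x) (t y)) := by
    intro v
    by_cases hcard : #v = K (t x)
    · congr 1
      refine prod_congr rfl fun y _ => ?_
      rw [sum_keyWeight_mul_ite_nonempty_inter _ _ (hcard ▸ hK _ _), pEdge, if_pos (hK _ _),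
        hcard]
    · simp [keyWeight, hcard]
  simp_rw [hv, ← sum_mul, sum_keyWeight (le_of_add_le_left (hK (t x) (t x))), one_mul]

noncomputable def atomWeight (μ : Fin r → ℝ) (α : Fin r → Fin r → ℝ) (K : Fin r → ℕ)
    (t : Fin n → Fin r) (σ : Fin n → Finset (Fin P)) (b : Fin n → Fin n → Bool) : ℝ :=
  (∏ y, μ (t y)) * (∏ y, keyWeight P (K (t y)) (σ y)) *
    channelWeight (fun y z => α (t y) (t z)) b

lemma atomWeight_nonneg (hμ0 : ∀ i, 0 ≤ μ i) (hα0 : ∀ i j, 0 ≤ α i j)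
    (hα1 : ∀ i j, α i j ≤ 1) (t : Fin n → Fin r) (σ : Fin n → Finset (Fin P))
    (b : Fin n → Fin n → Bool) : 0 ≤ atomWeight μ α K t σ b :=
  mul_nonneg (mul_nonneg (prod_nonneg fun _ _ => hμ0 _)
    (prod_nonneg fun _ _ => keyWeight_nonneg _ _ _))
    (channelWeight_nonneg (fun _ _ => hα0 _ _) (fun _ _ => hα1 _ _) b)

lemma sum_atomWeight_isolatingChannels (hK : ∀ i j, K i + K j ≤ P) (hμ : ∑ i, μ i = 1)
    (hα : ∀ i j, α i j = α j i) (x : Fin n) :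
    ∑ t, ∑ σ : Fin n → Finset (Fin P),
        ∑ b ∈ isolatingChannels x {w | (σ x ∩ σ w).Nonempty}, atomWeight μ α K t σ b =
      ∑ i, μ i * (1 - LamE μ α P K i) ^ (n - 1) := by
  have hchan : ∀ (t : Fin n → Fin r) (σ : Fin n → Finset (Fin P)),
      ∑ b ∈ isolatingChannels x {w | (σ x ∩ σ w).Nonempty},
        channelWeight (fun y z => α (t y) (t z)) b =
      ∏ y ∈ univ.erase x, if (σ x ∩ σ y).Nonempty then 1 - α (t x) (t y) else 1 :=
    fun t σ => by
      rw [sum_channelWeight_isolatingChannels x _ _ fun y z => hα (t y) (t z)]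
      simp_rw [mem_filter, mem_univ, true_and]
  simp only [atomWeight, ← mul_sum, hchan, mul_assoc, sum_keyWeight_mul_prod_erase_ite hK]
  rw [Fintype.sum_pi_prod_mul_prod_erase x (fun _ i => μ i)
    (fun _ i j => 1 - α i j * pEdge P K i j)]
  simp [sum_mul_one_sub_mul_pEdge hμ, card_erase_of_mem]

namespace HetModel

variable (M : HetModel r n P K μ α Ω Pr)

def atom (t : Fin n → Fin r) (σ : Fin n → Finset (Fin P)) (b : Fin n → Fin n → Bool) :
    Set Ω :=
  {ω | M.typ ω = t ∧ M.keyring ω = σ ∧ ∀ y z, y < z → M.chan ω y z = b y z}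

lemma measure_atom (t : Fin n → Fin r) (σ : Fin n → Finset (Fin P))
    (b : Fin n → Fin n → Bool) :
    Pr (M.atom t σ b) = ENNReal.ofReal (atomWeight μ α K t σ b) :=
  M.joint t σ b

lemma Isolated.exists_mem_atom {ω : Ω} {x : Fin n} (hx : M.Isolated ω x) :
    ∃ b ∈ isolatingChannels x {w | (M.keyring ω x ∩ M.keyring ω w).Nonempty},
      ω ∈ M.atom (M.typ ω) (M.keyring ω) b := by
  set S : Finset (Fin n) := {w | (M.keyring ω x ∩ M.keyring ω w).Nonempty}
  refine ⟨fun y z => if y < z ∧ ¬(y = x ∧ z ∈ S ∨ z = x ∧ y ∈ S) then M.chan ω y z else false,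
    ?_, rfl, rfl, fun y z hyz => ?_⟩
  · simp only [isolatingChannels, Fintype.mem_piFinset]
    intro y z
    split_ifs <;> simp
  · dsimp only
    split_ifs with hcut
    · rfl
    · simp only [hyz, true_and, not_not, S, mem_filter, mem_univ] at hcut
      rcases hcut with ⟨rfl, hz⟩ | ⟨rfl, hy⟩
      · exact Bool.eq_false_iff.2 fun h => hx z ⟨hyz.ne, hz, by rwa [if_pos hyz]⟩
      · exact Bool.eq_false_iff.2 fun h => hx y ⟨hyz.ne', hy, by rwa [if_neg hyz.not_gt]⟩

lemma measure_isolated_le (hK : ∀ i j, K i + K j ≤ P) (hμ0 : ∀ i, 0 ≤ μ i)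
    (hμ : ∑ i, μ i = 1) (hα0 : ∀ i j, 0 ≤ α i j) (hα1 : ∀ i j, α i j ≤ 1)
    (hα : ∀ i j, α i j = α j i) (x : Fin n) :
    Pr {ω | M.Isolated ω x} ≤ ENNReal.ofReal (∑ i, μ i * (1 - LamE μ α P K i) ^ (n - 1)) := by
  have hw := atomWeight_nonneg (n := n) (K := K) (P := P) hμ0 hα0 hα1
  calc Pr {ω | M.Isolated ω x}
      ≤ Pr (⋃ t, ⋃ σ, ⋃ b ∈ isolatingChannels x {w | (σ x ∩ σ w).Nonempty}, M.atom t σ b) :=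
        measure_mono fun ω hω => by
          obtain ⟨b, hb, hωb⟩ := hω.exists_mem_atom
          simp only [Set.mem_iUnion]
          exact ⟨_, _, b, hb, hωb⟩
    _ ≤ ∑ t, ∑ σ : Fin n → Finset (Fin P),
          ∑ b ∈ isolatingChannels x {w | (σ x ∩ σ w).Nonempty}, Pr (M.atom t σ b) :=
        (measure_iUnion_fintype_le _ _).trans <| sum_le_sum fun t _ =>
          (measure_iUnion_fintype_le _ _).trans <| sum_le_sum fun σ _ =>
            measure_biUnion_finset_le _ _
    _ = ENNReal.ofReal (∑ i, μ i * (1 - LamE μ α P K i) ^ (n - 1)) := by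
        simp only [measure_atom, ← sum_atomWeight_isolatingChannels hK hμ hα x]
        rw [ENNReal.ofReal_sum_of_nonneg fun t _ => sum_nonneg fun σ _ =>
          sum_nonneg fun b _ => hw t σ b]
        refine sum_congr rfl fun t _ => ?_
        rw [ENNReal.ofReal_sum_of_nonneg fun σ _ => sum_nonneg fun b _ => hw t σ b]
        exact sum_congr rfl fun σ _ => (ENNReal.ofReal_sum_of_nonneg fun b _ => hw t σ b).symm

lemma measure_exists_isolated_le (hK : ∀ i j, K i + K j ≤ P) (hμ0 : ∀ i, 0 ≤ μ i)
    (hμ : ∑ i, μ i = 1) (hα0 : ∀ i j, 0 ≤ α i j) (hα1 : ∀ i j, α i j ≤ 1)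
    (hα : ∀ i j, α i j = α j i) :
    Pr {ω | ∃ x, M.Isolated ω x} ≤
      ENNReal.ofReal (n * Real.exp (-((n - 1 : ℕ) * LamMin μ α P K))) := by
  have hx : ∀ x, Pr {ω | M.Isolated ω x} ≤
      ENNReal.ofReal (Real.exp (-((n - 1 : ℕ) * LamMin μ α P K))) := fun x =>
    (M.measure_isolated_le hK hμ0 hμ hα0 hα1 hα x).trans <| ENNReal.ofReal_le_ofReal <|
      sum_mul_one_sub_pow_le_exp hμ0 hμ (LamE_le_one hμ0 hμ hα1) LamMin_le_LamE _
  calc Pr {ω | ∃ x, M.Isolated ω x} ≤ ∑ x, Pr {ω | M.Isolated ω x} := by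
        rw [Set.ofPred_exists]; exact measure_iUnion_fintype_le _ _
    _ ≤ ∑ _x : Fin n, ENNReal.ofReal (Real.exp (-((n - 1 : ℕ) * LamMin μ α P K))) :=
        sum_le_sum fun x _ => hx x
    _ = ENNReal.ofReal (n * Real.exp (-((n - 1 : ℕ) * LamMin μ α P K))) := by
        rw [sum_const, card_univ, Fintype.card_fin, nsmul_eq_mul,
          ENNReal.ofReal_mul n.cast_nonneg, ENNReal.ofReal_natCast]

end HetModel

lemma tendsto_mul_exp_neg_mul_log_div {c : ℝ} (hc : 1 < c) {cn : ℕ → ℝ}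
    (hcn : Tendsto cn atTop (nhds c)) :
    Tendsto (fun n : ℕ => (n : ℝ) * Real.exp (-((n - 1 : ℕ) * (cn n * Real.log n / n))))
      atTop (nhds 0) := by
  have hfrac : Tendsto (fun n : ℕ => 1 - cn n * (1 - 1 / (n : ℝ))) atTop (nhds (1 - c)) := by
    simpa using (tendsto_const_nhds (x := (1 : ℝ))).sub
      (hcn.mul ((tendsto_const_nhds (x := (1 : ℝ))).sub tendsto_one_div_atTop_nhds_zero_nat))
  have hexp := Real.tendsto_exp_atBot.comp <| (Real.tendsto_log_atTop.comp
    tendsto_natCast_atTop_atTop).atTop_mul_neg (by linarith) hfrac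
  refine hexp.congr' ?_
  filter_upwards [eventually_ge_atTop 1] with n hn
  have hn0 : (0 : ℝ) < n := by exact_mod_cast hn
  rw [Function.comp_apply, Function.comp_apply, Nat.cast_sub hn, Nat.cast_one,
    ← Real.exp_log hn0, ← Real.exp_add, Real.exp_log hn0]
  congr 1
  field_simp
  ring

lemma tendsto_measure_compl_nhds_one {ι : Type*} {l : Filter ι} {Ω : ι → Type*}
    [∀ i, MeasurableSpace (Ω i)] {Pr : ∀ i, Measure (Ω i)}
    (hPr : ∀ i, IsProbabilityMeasure (Pr i)) {s : ∀ i, Set (Ω i)}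
    (hs : Tendsto (fun i => Pr i (s i)) l (nhds 0)) :
    Tendsto (fun i => Pr i (s i)ᶜ) l (nhds 1) := by
  have hlow : ∀ i, 1 - Pr i (s i) ≤ Pr i (s i)ᶜ := fun i => by
    rw [tsub_le_iff_left, ← measure_univ (μ := Pr i)]
    exact measure_univ_le_add_compl _
  refine tendsto_of_tendsto_of_tendsto_of_le_of_le ?_ tendsto_const_nhds hlow
    fun _ => prob_le_one
  simpa using ENNReal.Tendsto.sub tendsto_const_nhds hs (Or.inl ENNReal.one_ne_top)

theorem no_isolated_nodes_one_law_general
    (hμpos : ∀ i, 0 < μ i) (hμsum : ∑ i, μ i = 1)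
    (Pn : ℕ → ℕ) (Kn : ℕ → Fin r → ℕ)
    (hKP : ∀ n i, 2 * Kn n i ≤ Pn n)
    (αn : ℕ → Fin r → Fin r → ℝ)
    (hα0 : ∀ n i j, 0 < αn n i j) (hα1 : ∀ n i j, αn n i j < 1)
    (hαsymm : ∀ n i j, αn n i j = αn n j i)
    (c : ℝ) (hc : 1 < c) (cn : ℕ → ℝ)
    (hcn : Tendsto cn atTop (nhds c))
    (hscal : ∀ n, 2 ≤ n →
      LamMin μ (αn n) (Pn n) (Kn n) = cn n * Real.log n / n)
    (Ω : ℕ → Type) [mΩ : ∀ n, MeasurableSpace (Ω n)]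
    (Pr : ∀ n, Measure (Ω n)) (hPr : ∀ n, IsProbabilityMeasure (Pr n))
    (M : ∀ n, HetModel r n (Pn n) (Kn n) μ (αn n) (Ω n) (Pr n)) :
    Tendsto (fun n => Pr n {ω | ∀ x : Fin n, ¬ (M n).Isolated ω x})
      atTop (nhds (1 : ENNReal)) := by
  have hbad : ∀ n, Pr n {ω | ∃ x, (M n).Isolated ω x} ≤
      ENNReal.ofReal (n * Real.exp (-((n - 1 : ℕ) * LamMin μ (αn n) (Pn n) (Kn n)))) :=
    fun n => (M n).measure_exists_isolated_le
      (fun i j => by have := hKP n i; have := hKP n j; omega) (fun i => (hμpos i).le) hμsum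
      (fun i j => (hα0 n i j).le) (fun i j => (hα1 n i j).le) (hαsymm n)
  have hbound : Tendsto (fun n : ℕ =>
      (n : ℝ) * Real.exp (-((n - 1 : ℕ) * LamMin μ (αn n) (Pn n) (Kn n)))) atTop (nhds 0) :=
    (tendsto_mul_exp_neg_mul_log_div hc hcn).congr' <| by
      filter_upwards [eventually_ge_atTop 2] with n hn
      rw [hscal n hn]
  have hbad_lim : Tendsto (fun n => Pr n {ω | ∃ x, (M n).Isolated ω x}) atTop (nhds 0) :=
    tendsto_of_tendsto_of_tendsto_of_le_of_le tendsto_const_nhds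
      (ENNReal.ofReal_zero ▸ ENNReal.tendsto_ofReal hbound) (fun _ => zero_le) hbad
  simpa [Set.compl_ofPred] using tendsto_measure_compl_nhds_one hPr hbad_lim

/-- one-law for absence of isolated nodes.
Under any scaling with `Λ_m(n) = c_n log n / n` and `c_n → c > 1`, the
probability that `H(n; μ, Θ_n)` has no isolated nodes tends to `1`. -/
theorem no_isolated_nodes_one_law
    (hr : 0 < r)
    (hμpos : ∀ i, 0 < μ i) (hμsum : ∑ i, μ i = 1)
    (Pn : ℕ → ℕ) (Kn : ℕ → Fin r → ℕ)
    (hKpos : ∀ n i, 1 ≤ Kn n i)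
    (hKmono : ∀ n, Monotone (Kn n))
    (hKP : ∀ n i, 2 * Kn n i ≤ Pn n)
    (αn : ℕ → Fin r → Fin r → ℝ)
    (hα0 : ∀ n i j, 0 < αn n i j) (hα1 : ∀ n i j, αn n i j < 1)
    (hαsymm : ∀ n i j, αn n i j = αn n j i)
    (c : ℝ) (hc : 1 < c) (cn : ℕ → ℝ)
    (hcn : Tendsto cn atTop (nhds c))
    (hscal : ∀ n, 2 ≤ n →
      LamMin μ (αn n) (Pn n) (Kn n) = cn n * Real.log n / n)
    (Ω : ℕ → Type) [mΩ : ∀ n, MeasurableSpace (Ω n)]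
    (Pr : ∀ n, Measure (Ω n)) (hPr : ∀ n, IsProbabilityMeasure (Pr n))
    (M : ∀ n, HetModel r n (Pn n) (Kn n) μ (αn n) (Ω n) (Pr n)) :
    Tendsto (fun n => Pr n {ω | ∀ x : Fin n, ¬ (M n).Isolated ω x})
      atTop (nhds (1 : ENNReal)) :=
  no_isolated_nodes_one_law_general hμpos hμsum Pn Kn hKP αn hα0 hα1 hαsymm c hc cn hcn hscal Ω
    (mΩ := mΩ) Pr hPr M
end

section
/- For any positive integers K_i, K_j, P with K_j ≤ P, and any real scalar a ≥ 1, one has C(P − ⌈a·K_i⌉, K_j)/C(P, K_j) ≤ ( C(P − K_i, K_j)/C(P, K_j) )^a, where the right-hand side uses the real power with exponent a and ⌈·⌉ denotes the ceiling function. -/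
/-!
Writing `C(n - m, k) / C(n, k) = ∏_{i<k} (1 - m / (n - i))`, it suffices to compare factors.
With `c ≥ a m` and `a ≥ 1`, Bernoulli's inequality gives
`1 - c / x ≤ 1 + a · (-m / x) ≤ (1 - m / x) ^ a` for every `x ≥ m`.
-/

open Finset

/-- No side condition is needed: with truncated subtraction, a factor of the product vanishes
exactly when one of the two binomial coefficients does. -/
theorem Nat.cast_choose_sub_div_cast_choose_eq_prod {K : Type*} [Field K] [CharZero K]
    (n m k : ℕ) :
    ((n - m).choose k : K) / n.choose k = ∏ i ∈ range k, ((n - m - i : ℕ) : K) / (n - i : ℕ) := by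
  have hk : (k.factorial : K) ≠ 0 := by exact_mod_cast k.factorial_ne_zero
  rw [prod_div_distrib, ← mul_div_mul_left _ _ hk]
  simp only [← Nat.cast_mul, ← Nat.descFactorial_eq_factorial_mul_choose,
    Nat.descFactorial_eq_prod_range, Nat.cast_prod]

theorem cast_sub_div_le_rpow {a : ℝ} (ha : 1 ≤ a) {N m c : ℕ} (hc : a * m ≤ c) :
    ((N - c : ℕ) : ℝ) / N ≤ (((N - m : ℕ) : ℝ) / N) ^ a := by
  rcases lt_or_ge N c with hNc | hcN
  · rw [Nat.sub_eq_zero_of_le hNc.le, Nat.cast_zero, zero_div]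
    positivity
  rcases N.eq_zero_or_pos with rfl | hN
  · simp only [Nat.cast_zero, div_zero]
    positivity
  have hmc : m ≤ c := by exact_mod_cast (le_mul_of_one_le_left m.cast_nonneg ha).trans hc
  have hN' : (0 : ℝ) < N := by exact_mod_cast hN
  have hmN : (m : ℝ) / N ≤ 1 := (div_le_one hN').2 (by exact_mod_cast hmc.trans hcN)
  rw [Nat.cast_sub hcN, Nat.cast_sub (hmc.trans hcN), sub_div, sub_div, div_self hN'.ne']
  calc 1 - (c : ℝ) / N ≤ 1 + a * -((m : ℝ) / N) := by
        rw [mul_neg, ← sub_eq_add_neg, mul_div_assoc', sub_le_sub_iff_left]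
        gcongr
    _ ≤ (1 + -((m : ℝ) / N)) ^ a := one_add_mul_self_le_rpow_one_add (by linarith) ha
    _ = (1 - (m : ℝ) / N) ^ a := by rw [← sub_eq_add_neg]

theorem cast_choose_sub_div_cast_choose_le_rpow {a : ℝ} (ha : 1 ≤ a) {m c : ℕ} (hc : a * m ≤ c)
    (n k : ℕ) :
    ((n - c).choose k : ℝ) / n.choose k ≤ (((n - m).choose k : ℝ) / n.choose k) ^ a := by
  rw [Nat.cast_choose_sub_div_cast_choose_eq_prod, Nat.cast_choose_sub_div_cast_choose_eq_prod,
    ← Real.finsetProd_rpow _ _ fun i _ => by positivity]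
  refine prod_le_prod (fun i _ => by positivity) fun i _ => ?_
  rw [Nat.sub_right_comm, Nat.sub_right_comm n m]
  exact cast_sub_div_le_rpow ha hc

theorem choose_ratio_rpow_bound_general (P Ki Kj : ℕ)
    (a : ℝ) (ha : 1 ≤ a) :
    ((P - ⌈a * (Ki : ℝ)⌉₊).choose Kj : ℝ) / (P.choose Kj : ℝ) ≤
      (((P - Ki).choose Kj : ℝ) / (P.choose Kj : ℝ)) ^ a :=
  cast_choose_sub_div_cast_choose_le_rpow ha (Nat.le_ceil _) P Kj

/-- for positive integers `K_i, K_j, P` with `K_j ≤ P` and any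
real `a ≥ 1`, `C(P−⌈a·K_i⌉, K_j)/C(P, K_j) ≤ (C(P−K_i, K_j)/C(P, K_j))^a`,
where the right-hand power is the real power with exponent `a`. -/
theorem choose_ratio_rpow_bound (P Ki Kj : ℕ)
    (hP : 0 < P) (hKi : 0 < Ki) (hKj : 0 < Kj) (hKjP : Kj ≤ P)
    (a : ℝ) (ha : 1 ≤ a) :
    ((P - ⌈a * (Ki : ℝ)⌉₊).choose Kj : ℝ) / (P.choose Kj : ℝ) ≤
      (((P - Ki).choose Kj : ℝ) / (P.choose Kj : ℝ)) ^ a :=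
  choose_ratio_rpow_bound_general P Ki Kj a ha
end
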